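/- Let S be the monoid presented by ⟨a, b | a² = 1, ab = b⟩, whose elements are {bⁱaᵏ : i ≥ 0, k ∈ {0,1}}. Then the ∼o-conjugacy classes of S are {1}, {a}, and {bⁱ, bⁱa} for each i ≥ 1. -/

import Mathlib

/-- The defining relations `a² = 1` and `ab = b` on the free monoid on two generators. -/
def baRel : FreeMonoid (Fin 2) → FreeMonoid (Fin 2) → Prop := fun x y =>
  (x = FreeMonoid.of 0 * FreeMonoid.of 0 ∧ y = 1) ∨
  (x = FreeMonoid.of 0 * FreeMonoid.of 1 ∧ y = FreeMonoid.of 1)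

/-- The monoid `S = ⟨a, b | a² = 1, ab = b⟩`. -/
abbrev BaMonoid := (conGen baRel).Quotient

def genA : BaMonoid := (conGen baRel).mk' (FreeMonoid.of 0)
def genB : BaMonoid := (conGen baRel).mk' (FreeMonoid.of 1)

/-- Otto conjugacy: `x ∼o y` iff `xg = gy` and `yh = hx` for some `g, h`. -/
def oRel {S : Type*} [Mul S] (x y : S) : Prop :=
  ∃ g h : S, x * g = g * y ∧ y * h = h * x

/-! The number of `b`'s is a homomorphism to `ℕ`, and `∼o` collapses to equality in a commutative
cancellative monoid, so `∼o` preserves `i` in the normal form `bⁱaᵏ`. For `i ≥ 1` the element `a`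
conjugates `bⁱ` to `bⁱa` because `abⁱ = bⁱ`. For `i = 0`, `1 ∼o a` would give `g = ga` for some `g`;
this is ruled out by the right action of `S` on `Bool` in which `a` flips and `b` resets to
`false` (it respects `a² = 1` and `ab = b`), under which `ga` and `g` send `false` to different
values. -/

section oRel

variable {M : Type*}

theorem oRel.refl [MulOneClass M] (x : M) : oRel x x :=
  ⟨1, 1, by simp, by simp⟩

theorem oRel.symm [Mul M] {x y : M} : oRel x y → oRel y x
  | ⟨g, h, hg, hh⟩ => ⟨h, g, hh, hg⟩

theorem oRel.map {N F : Type*} [Mul M] [Mul N] [FunLike F M N] [MulHomClass F M N] (f : F)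
    {x y : M} : oRel x y → oRel (f x) (f y)
  | ⟨g, h, hg, hh⟩ => ⟨f g, f h, by simp only [← map_mul, hg], by simp only [← map_mul, hh]⟩

theorem oRel.eq [CommMagma M] [IsRightCancelMul M] {x y : M} : oRel x y → x = y
  | ⟨g, _, hg, _⟩ => mul_right_cancel (hg.trans (mul_comm g y))

end oRel

namespace BaMonoid

theorem genA_mul_genA : genA * genA = 1 :=
  (Con.eq _).2 (ConGen.Rel.of _ _ (Or.inl ⟨rfl, rfl⟩))

theorem genA_mul_genB : genA * genB = genB :=
  (Con.eq _).2 (ConGen.Rel.of _ _ (Or.inr ⟨rfl, rfl⟩))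

theorem genA_mul_genB_pow {i : ℕ} (hi : i ≠ 0) : genA * genB ^ i = genB ^ i := by
  obtain ⟨n, rfl⟩ := Nat.exists_eq_add_one_of_ne_zero hi
  rw [pow_succ', ← mul_assoc, genA_mul_genB]

def lift {M : Type*} [Monoid M] (a b : M) (haa : a * a = 1) (hab : a * b = b) : BaMonoid →* M :=
  (conGen baRel).lift (FreeMonoid.lift ![a, b]) <| Con.conGen_le.2 <| by
    rintro _ _ (⟨rfl, rfl⟩ | ⟨rfl, rfl⟩) <;> simp [Con.ker_rel, haa, hab]

section lift

variable {M : Type*} [Monoid M] {a b : M} (haa : a * a = 1) (hab : a * b = b)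

@[simp] theorem lift_genA : lift a b haa hab genA = a := by simp [lift, genA]

@[simp] theorem lift_genB : lift a b haa hab genB = b := by simp [lift, genB]

end lift

theorem induction_on_left {p : BaMonoid → Prop} (one : p 1)
    (genA_mul : ∀ x, p x → p (genA * x)) (genB_mul : ∀ x, p x → p (genB * x)) (x : BaMonoid) :
    p x := by
  induction x using Con.induction_on with | H w => ?_
  induction w using FreeMonoid.inductionOn' with
  | one => exact one
  | of_mul c w ih =>
    rw [Con.coe_mul]
    fin_cases c
    exacts [genA_mul _ ih, genB_mul _ ih]

theorem exists_eq_genB_pow_or_genB_pow_mul_genA (x : BaMonoid) :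
    ∃ i : ℕ, x = genB ^ i ∨ x = genB ^ i * genA := by
  induction x using induction_on_left with
  | one => exact ⟨0, .inl (pow_zero _).symm⟩
  | genA_mul x ih =>
    obtain ⟨i, rfl | rfl⟩ := ih <;> rcases eq_or_ne i 0 with rfl | hi
    · exact ⟨0, .inr (by simp)⟩
    · exact ⟨i, .inl (genA_mul_genB_pow hi)⟩
    · exact ⟨0, .inl (by simp [genA_mul_genA])⟩
    · exact ⟨i, .inr (by rw [← mul_assoc, genA_mul_genB_pow hi])⟩
  | genB_mul x ih =>
    obtain ⟨i, rfl | rfl⟩ := ih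
    exacts [⟨i + 1, .inl (pow_succ' _ _).symm⟩, ⟨i + 1, .inr (by rw [pow_succ', mul_assoc])⟩]

def bCount : BaMonoid →* Multiplicative ℕ :=
  lift 1 (.ofAdd 1) (one_mul 1) (one_mul _)

@[simp] theorem bCount_genB_pow (i : ℕ) : bCount (genB ^ i) = .ofAdd i := by
  simp [bCount, ← ofAdd_nsmul]

@[simp] theorem bCount_genB_pow_mul_genA (i : ℕ) : bCount (genB ^ i * genA) = .ofAdd i := by
  rw [map_mul, bCount_genB_pow, bCount, lift_genA, mul_one]

def endsInAAction : BaMonoid →* (Function.End Bool)ᵐᵒᵖ :=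
  lift (.op (not : Bool → Bool)) (.op (fun _ => false)) (congrArg _ (funext Bool.not_not)) rfl

def endsInA (g : BaMonoid) : Bool := (endsInAAction g).unop false

theorem endsInA_mul_genA (g : BaMonoid) : endsInA (g * genA) = !endsInA g := by
  simp only [endsInA, endsInAAction, map_mul, lift_genA, MulOpposite.unop_mul]
  rfl

theorem mul_genA_ne_self (g : BaMonoid) : g * genA ≠ g := fun h => by
  simpa [endsInA_mul_genA] using congrArg endsInA h

theorem not_oRel_one_genA : ¬ oRel 1 genA := fun ⟨g, _, hg, _⟩ =>
  mul_genA_ne_self g (by simpa using hg.symm)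

theorem oRel_genB_pow_mul_genA {i : ℕ} (hi : i ≠ 0) : oRel (genB ^ i) (genB ^ i * genA) :=
  ⟨genA, genA, by rw [← mul_assoc, genA_mul_genB_pow hi],
    by rw [mul_assoc, genA_mul_genA, mul_one, genA_mul_genB_pow hi]⟩

end BaMonoid

open BaMonoid in
/-- In `S = ⟨a, b | a² = 1, ab = b⟩`, the `∼o`-classes are `{1}`, `{a}`, and
`{bⁱ, bⁱa}` for each `i ≥ 1`. -/
theorem stmt_9 (x y : BaMonoid) :
    oRel x y ↔ (x = y ∨ ∃ i : ℕ, 1 ≤ i ∧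
      ((x = genB ^ i ∧ y = genB ^ i * genA) ∨ (x = genB ^ i * genA ∧ y = genB ^ i))) := by
  constructor
  · intro hxy
    obtain ⟨i, rfl | rfl⟩ := exists_eq_genB_pow_or_genB_pow_mul_genA x <;>
      obtain ⟨j, rfl | rfl⟩ := exists_eq_genB_pow_or_genB_pow_mul_genA y <;>
      obtain rfl : i = j := by simpa using (hxy.map bCount).eq
    · exact .inl rfl
    · obtain rfl | hi := eq_or_ne i 0
      · exact absurd (by simpa using hxy) not_oRel_one_genA
      · exact .inr ⟨i, Nat.one_le_iff_ne_zero.2 hi, .inl ⟨rfl, rfl⟩⟩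
    · obtain rfl | hi := eq_or_ne i 0
      · exact absurd (by simpa using hxy.symm) not_oRel_one_genA
      · exact .inr ⟨i, Nat.one_le_iff_ne_zero.2 hi, .inr ⟨rfl, rfl⟩⟩
    · exact .inl rfl
  · rintro (rfl | ⟨i, hi, ⟨rfl, rfl⟩ | ⟨rfl, rfl⟩⟩)
    · exact oRel.refl x
    · exact oRel_genB_pow_mul_genA (Nat.one_le_iff_ne_zero.1 hi)
    · exact (oRel_genB_pow_mul_genA (Nat.one_le_iff_ne_zero.1 hi)).symm
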